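/- arXiv:1408.0262 — 2 statements merged into one kernel-verified Lean document; each statement's English description precedes it below -/
import Mathlib

section
/- Let α ∈ GF(2)^{m×m} be symmetric with rank(α) = k. Then there exist linearly independent vectors z₁,…,z_k ∈ GF(2)^m and nonnegative integers s, t with k = s + 2t such that α = Σ_{i=1}^{s} z_i⊗z_i + Σ_{j=1}^{t} (z_{s+2j}⊗z_{s+2j-1} + z_{s+2j-1}⊗z_{s+2j}). -/
/-!
Induct on the rank. Pivoting a matrix `A` at an entry `A p q ≠ 0`, i.e. passing to
`A - (A p q)⁻¹ • (column q) ⊗ (row p)`, kills row `p` while keeping the column space inside that of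
`A`; since column `q` of `A` has a nonzero `p`-th entry, the column space shrinks strictly. For a
symmetric matrix over `GF(2)` with a nonzero diagonal entry `α i i = 1`, one pivot at `(i, i)`
splits off the square `α i ⊗ α i`. Otherwise some `α i j = 1` with `α i i = α j j = 0`, and two
pivots, at `(j, i)` and then `(i, j)`, split off the hyperbolic pair `α i ⊗ α j + α j ⊗ α i`; the
remainder is again symmetric. All vectors split off lie in the column space of `α`, which they
span, and there are at most `rank α` of them, so they are exactly `rank α` independent vectors.
-/

open Matrix

namespace Matrix

section RankReduction

variable {K m n : Type*} [Fintype n] [DecidableEq n]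

theorem range_mulVecLin_sub_smul_vecMulVec_col_le [CommRing K] (A : Matrix m n K) (c : K) (q : n)
    (w : n → K) :
    LinearMap.range (A - c • vecMulVec (A.col q) w).mulVecLin ≤ LinearMap.range A.mulVecLin := by
  rintro _ ⟨x, rfl⟩
  refine ⟨x - (c * (w ⬝ᵥ x)) • Pi.single q 1, ?_⟩
  simp [mulVec_sub, mulVec_smul, vecMulVec_mulVec, mul_smul]

theorem range_mulVecLin_sub_inv_smul_vecMulVec_lt [Field K] (A : Matrix m n K) {p : m} {q : n}
    (h : A p q ≠ 0) :
    LinearMap.range (A - (A p q)⁻¹ • vecMulVec (A.col q) (A p)).mulVecLin <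
      LinearMap.range A.mulVecLin := by
  set B := A - (A p q)⁻¹ • vecMulVec (A.col q) (A p)
  have hrow : B p = 0 := by
    ext r
    simp [B, vecMulVec_apply, inv_mul_cancel_left₀ h]
  refine lt_of_le_of_ne (range_mulVecLin_sub_smul_vecMulVec_col_le A _ q _) fun heq => h ?_
  obtain ⟨y, hy⟩ : A.col q ∈ LinearMap.range B.mulVecLin :=
    heq ▸ ⟨Pi.single q 1, mulVec_single_one A q⟩
  simpa [mulVec, hrow] using (congrFun hy p).symm

end RankReduction

section DiagHyperbolicSum

variable {R n : Type*} [CommSemiring R]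

def diagHyperbolicSum (s t : ℕ) (z : ℕ → n → R) : Matrix n n R :=
  (∑ a ∈ Finset.range s, vecMulVec (z a) (z a)) +
    ∑ b ∈ Finset.range t,
      (vecMulVec (z (s + 2 * b + 1)) (z (s + 2 * b)) +
        vecMulVec (z (s + 2 * b)) (z (s + 2 * b + 1)))

theorem diagHyperbolicSum_congr {s t : ℕ} {z z' : ℕ → n → R}
    (h : ∀ i < s + 2 * t, z i = z' i) :
    diagHyperbolicSum s t z = diagHyperbolicSum s t z' := by
  unfold diagHyperbolicSum
  congr 1
  · refine Finset.sum_congr rfl fun a ha => ?_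
    rw [Finset.mem_range] at ha
    rw [h a (by omega)]
  · refine Finset.sum_congr rfl fun b hb => ?_
    rw [Finset.mem_range] at hb
    rw [h (s + 2 * b) (by omega), h (s + 2 * b + 1) (by omega)]

theorem diagHyperbolicSum_succ_left (s t : ℕ) (z : ℕ → n → R) :
    diagHyperbolicSum (s + 1) t z =
      vecMulVec (z 0) (z 0) + diagHyperbolicSum s t fun i => z (i + 1) := by
  simp only [diagHyperbolicSum, Finset.sum_range_succ', Nat.add_right_comm s 1]
  abel

theorem diagHyperbolicSum_succ_right (s t : ℕ) (z : ℕ → n → R) :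
    diagHyperbolicSum s (t + 1) z = diagHyperbolicSum s t z +
      (vecMulVec (z (s + 2 * t + 1)) (z (s + 2 * t)) +
        vecMulVec (z (s + 2 * t)) (z (s + 2 * t + 1))) := by
  rw [diagHyperbolicSum, diagHyperbolicSum, Finset.sum_range_succ, ← add_assoc]

theorem range_mulVecLin_diagHyperbolicSum_le [Fintype n] (s t : ℕ) (z : ℕ → n → R) :
    LinearMap.range (diagHyperbolicSum s t z).mulVecLin ≤
      Submodule.span R (Set.range fun i : Fin (s + 2 * t) => z i) := by
  rintro _ ⟨x, rfl⟩
  have hz : ∀ i < s + 2 * t, z i ∈ Submodule.span R (Set.range fun i : Fin (s + 2 * t) => z i) :=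
    fun i hi => Submodule.subset_span ⟨⟨i, hi⟩, rfl⟩
  simp only [mulVecLin_apply, diagHyperbolicSum, add_mulVec, sum_mulVec, vecMulVec_mulVec,
    op_smul_eq_smul]
  refine add_mem (Submodule.sum_mem _ fun a ha => ?_) (Submodule.sum_mem _ fun b hb => ?_)
  · rw [Finset.mem_range] at ha
    exact Submodule.smul_mem _ _ (hz a (by omega))
  · rw [Finset.mem_range] at hb
    exact add_mem (Submodule.smul_mem _ _ (hz _ (by omega)))
      (Submodule.smul_mem _ _ (hz _ (by omega)))

end DiagHyperbolicSum

section Decomp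

variable {K n : Type*} [Field K] [Fintype n]

def HasDiagHyperbolicDecomp (A : Matrix n n K) : Prop :=
  ∃ s t z, s + 2 * t ≤ A.rank ∧ (∀ i < s + 2 * t, z i ∈ LinearMap.range A.mulVecLin) ∧
    A = diagHyperbolicSum s t z

theorem hasDiagHyperbolicDecomp_zero : HasDiagHyperbolicDecomp (0 : Matrix n n K) :=
  ⟨0, 0, 0, by simp, by simp, by simp [diagHyperbolicSum]⟩

theorem HasDiagHyperbolicDecomp.add_vecMulVec_self {A B : Matrix n n K} {u : n → K}
    (hA : HasDiagHyperbolicDecomp A)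
    (hlt : LinearMap.range A.mulVecLin < LinearMap.range B.mulVecLin)
    (hu : u ∈ LinearMap.range B.mulVecLin) (hB : B = A + vecMulVec u u) :
    HasDiagHyperbolicDecomp B := by
  have hrank : A.rank < B.rank := Submodule.finrank_lt_finrank_of_lt hlt
  obtain ⟨s, t, z, hcard, hz, rfl⟩ := hA
  refine ⟨s + 1, t, fun i => Nat.casesOn i u z, by omega, ?_, ?_⟩
  · rintro (_ | i) hi
    · exact hu
    · exact hlt.le (hz i (by omega))
  · rw [hB, diagHyperbolicSum_succ_left, add_comm]
    rfl

theorem HasDiagHyperbolicDecomp.add_hyperbolic {A B : Matrix n n K} {W : Submodule K (n → K)}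
    {u v : n → K} (hA : HasDiagHyperbolicDecomp A) (hAW : LinearMap.range A.mulVecLin < W)
    (hWB : W < LinearMap.range B.mulVecLin) (hu : u ∈ LinearMap.range B.mulVecLin)
    (hv : v ∈ LinearMap.range B.mulVecLin) (hB : B = A + (vecMulVec v u + vecMulVec u v)) :
    HasDiagHyperbolicDecomp B := by
  have hrankAW : A.rank < Module.finrank K W := Submodule.finrank_lt_finrank_of_lt hAW
  have hrankWB : Module.finrank K W < B.rank := Submodule.finrank_lt_finrank_of_lt hWB
  obtain ⟨s, t, z, hcard, hz, rfl⟩ := hA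
  set z' : ℕ → n → K := fun i => if i < s + 2 * t then z i else if i = s + 2 * t then u else v
  refine ⟨s, t + 1, z', by omega, fun i hi => ?_, ?_⟩
  · simp only [z']
    split_ifs with hlt
    · exact (hAW.trans hWB).le (hz i hlt)
    · exact hu
    · exact hv
  · have hzz' : ∀ i < s + 2 * t, z i = z' i := fun i hi => by simp [z', hi]
    simp [hB, diagHyperbolicSum_succ_right, diagHyperbolicSum_congr hzz', z']

theorem HasDiagHyperbolicDecomp.exists_linearIndependent {A : Matrix n n K}
    (hA : HasDiagHyperbolicDecomp A) :
    ∃ s t z, s + 2 * t = A.rank ∧ LinearIndependent K (fun i : Fin (s + 2 * t) => z i) ∧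
      A = diagHyperbolicSum s t z := by
  obtain ⟨s, t, z, hcard, hz, rfl⟩ := hA
  have hspan : Submodule.span K (Set.range fun i : Fin (s + 2 * t) => z i) =
      LinearMap.range (diagHyperbolicSum s t z).mulVecLin :=
    le_antisymm (Submodule.span_le.2 <| Set.range_subset_iff.2 fun i => hz i i.2)
      (range_mulVecLin_diagHyperbolicSum_le s t z)
  have hle := finrank_range_le_card (R := K) fun i : Fin (s + 2 * t) => z i
  rw [Set.finrank, hspan, Fintype.card_fin] at hle
  have hk : s + 2 * t = (diagHyperbolicSum s t z).rank := le_antisymm hcard hle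
  refine ⟨s, t, z, hk, ?_, rfl⟩
  rwa [linearIndependent_iff_card_eq_finrank_span, Fintype.card_fin, Set.finrank, hspan]

end Decomp

section Symmetric

variable {K n : Type*} [Field K] [Fintype n] [DecidableEq n]

theorem IsSymm.range_mulVecLin_sub_vecMulVec_self_lt {α : Matrix n n K} (hα : α.IsSymm) {i : n}
    (hii : α i i = 1) :
    LinearMap.range (α - vecMulVec (α i) (α i)).mulVecLin < LinearMap.range α.mulVecLin := by
  have h := range_mulVecLin_sub_inv_smul_vecMulVec_lt α (p := i) (q := i) (by simp [hii])
  rwa [hii, inv_one, one_smul, show α.col i = α i from congrFun hα i] at h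

/-- Pivoting at `(j, i)` leaves row `i` and column `j` unchanged because `α i i = α j j = 0`,
so the second pivot, at `(i, j)`, subtracts `α j ⊗ α i`. -/
theorem IsSymm.range_mulVecLin_sub_hyperbolic_lt {α : Matrix n n K} (hα : α.IsSymm) {i j : n}
    (hii : α i i = 0) (hjj : α j j = 0) (hij : α i j = 1) :
    LinearMap.range (α - vecMulVec (α i) (α j) - vecMulVec (α j) (α i)).mulVecLin <
        LinearMap.range (α - vecMulVec (α i) (α j)).mulVecLin ∧
      LinearMap.range (α - vecMulVec (α i) (α j)).mulVecLin < LinearMap.range α.mulVecLin := by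
  set β := α - vecMulVec (α i) (α j)
  have hcol : ∀ k, α.col k = α k := fun k => congrFun hα k
  have hβij : β i j = 1 := by simp [β, vecMulVec_apply, hii, hij]
  have hβcol : β.col j = α j := by
    ext r
    simp [β, vecMulVec_apply, hjj, ← hcol j]
  have hβrow : β i = α i := by
    ext r
    simp [β, vecMulVec_apply, hii]
  constructor
  · have h := range_mulVecLin_sub_inv_smul_vecMulVec_lt β (p := i) (q := j) (by simp [hβij])
    rwa [hβij, inv_one, one_smul, hβcol, hβrow] at h
  · have h := range_mulVecLin_sub_inv_smul_vecMulVec_lt α (p := j) (q := i)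
      (by simp [hα.apply, hij])
    rwa [hα.apply, hij, inv_one, one_smul, hcol] at h

theorem IsSymm.hasDiagHyperbolicDecomp {α : Matrix n n (ZMod 2)} (hα : α.IsSymm) :
    HasDiagHyperbolicDecomp α := by
  induction hr : α.rank using Nat.strong_induction_on generalizing α with
  | _ r ih =>
  obtain rfl | ⟨i, j, hij⟩ : α = 0 ∨ ∃ i j, α i j ≠ 0 := by
    by_contra! h
    exact h.1 (Matrix.ext h.2)
  · exact hasDiagHyperbolicDecomp_zero
  have hrow : ∀ k, α k ∈ LinearMap.range α.mulVecLin := fun k =>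
    ⟨Pi.single k 1, (mulVec_single_one α k).trans (congrFun hα k)⟩
  have of_diag_ne_zero : ∀ k, α k k ≠ 0 → HasDiagHyperbolicDecomp α := fun k hkk => by
    have hlt := hα.range_mulVecLin_sub_vecMulVec_self_lt (Fin.eq_one_of_ne_zero _ hkk)
    have hsymm : (α - vecMulVec (α k) (α k)).IsSymm := hα.sub (transpose_vecMulVec _ _)
    exact (ih _ (hr ▸ Submodule.finrank_lt_finrank_of_lt hlt) hsymm rfl).add_vecMulVec_self
      hlt (hrow k) (sub_add_cancel _ _).symm
  rcases ne_or_eq (α i i) 0 with hii | hii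
  · exact of_diag_ne_zero i hii
  rcases ne_or_eq (α j j) 0 with hjj | hjj
  · exact of_diag_ne_zero j hjj
  obtain ⟨hlt₁, hlt₂⟩ :=
    hα.range_mulVecLin_sub_hyperbolic_lt hii hjj (Fin.eq_one_of_ne_zero _ hij)
  have hsymm : (α - vecMulVec (α i) (α j) - vecMulVec (α j) (α i)).IsSymm := by
    simp only [IsSymm, transpose_sub, transpose_vecMulVec, hα.eq]
    abel
  exact (ih _ (hr ▸ Submodule.finrank_lt_finrank_of_lt (hlt₁.trans hlt₂)) hsymm rfl).add_hyperbolic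
    hlt₁ hlt₂ (hrow i) (hrow j) (by abel)

end Symmetric

end Matrix

theorem symmetric_rank_decomposition {m k : ℕ}
    (α : Matrix (Fin m) (Fin m) (ZMod 2))
    (hsym : α.transpose = α) (hrank : α.rank = k) :
    ∃ (s t : ℕ) (z : ℕ → (Fin m → ZMod 2)),
      k = s + 2 * t ∧
      LinearIndependent (ZMod 2) (fun i : Fin k => z i) ∧
      α = (∑ a ∈ Finset.range s, Matrix.vecMulVec (z a) (z a)) +
          ∑ b ∈ Finset.range t,
            (Matrix.vecMulVec (z (s + 2 * b + 1)) (z (s + 2 * b)) +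
             Matrix.vecMulVec (z (s + 2 * b)) (z (s + 2 * b + 1))) := by
  obtain ⟨s, t, z, hcard, hindep, hdecomp⟩ :=
    (IsSymm.hasDiagHyperbolicDecomp hsym).exists_linearIndependent
  subst hrank
  rw [← hcard]
  exact ⟨s, t, z, rfl, hindep, hdecomp⟩
end

section
/- Conversely: if z₁,…,z_k ∈ GF(2)^m are linearly independent and α = Σ_{i=1}^{s} z_i⊗z_i + Σ_{j=1}^{t} (z_{s+2j}⊗z_{s+2j-1} + z_{s+2j-1}⊗z_{s+2j}) with k = s + 2t, then rank(α) = k. -/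
/-!
Reindexing the second factors by the involution `σ` that fixes `i < s` and swaps the two
indices of each hyperbolic block, `α = ∑ i, z i ⊗ z (σ i) = Zᵀ W`, where `Z` has rows `z i`
and `W` has rows `z (σ i)`. Both row families are linearly independent, so `Zᵀ` is injective and
`rank α = rank W = k`.
-/

open Matrix Finset

theorem Matrix.rank_mul_eq_right_of_mulVec_injective {K l m n : Type*} [Field K] [Fintype m]
    [Fintype n] {A : Matrix l m K} (hA : Function.Injective A.mulVec) (B : Matrix m n K) :
    (A * B).rank = B.rank := by
  rw [rank, rank, mulVecLin_mul, LinearMap.range_comp,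
    ← (Submodule.equivMapOfInjective A.mulVecLin hA _).finrank_eq]

theorem Matrix.sum_vecMulVec_eq_transpose_mul {R ι m n : Type*} [CommSemiring R] [Fintype ι]
    (u : ι → m → R) (v : ι → n → R) :
    ∑ i, vecMulVec (u i) (v i) = (of u)ᵀ * of v := by
  ext r c
  simp [mul_apply, vecMulVec_apply, sum_apply]

theorem Matrix.rank_sum_vecMulVec_of_linearIndependent {K ι m : Type*} [Field K] [Fintype ι]
    [Fintype m] {u v : ι → m → K} (hu : LinearIndependent K u) (hv : LinearIndependent K v) :
    (∑ i, vecMulVec (u i) (v i)).rank = Fintype.card ι := by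
  rw [sum_vecMulVec_eq_transpose_mul, rank_mul_eq_right_of_mulVec_injective,
    rank_eq_finrank_span_row]
  · exact finrank_span_eq_card hv
  · exact mulVec_injective_iff.2 hu

def pairSwap (s n : ℕ) : ℕ :=
  if n < s then n else if (n - s) % 2 = 0 then n + 1 else n - 1

theorem pairSwap_involutive (s : ℕ) : Function.Involutive (pairSwap s) := by
  intro n
  unfold pairSwap
  split_ifs <;> omega

theorem pairSwap_lt {s t n : ℕ} (h : n < s + 2 * t) : pairSwap s n < s + 2 * t := by
  unfold pairSwap
  split_ifs <;> omega

theorem Finset.sum_range_two_mul {M : Type*} [AddCommMonoid M] (f : ℕ → M) (t : ℕ) :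
    ∑ i ∈ range (2 * t), f i = ∑ b ∈ range t, (f (2 * b) + f (2 * b + 1)) := by
  induction t with
  | zero => simp
  | succ t ih => rw [mul_add_one, sum_range_succ, sum_range_succ, sum_range_succ, ih, add_assoc]

theorem sum_range_pairSwap {M : Type*} [AddCommMonoid M] (f : ℕ → ℕ → M) (s t : ℕ) :
    ∑ n ∈ range (s + 2 * t), f n (pairSwap s n) =
      ∑ a ∈ range s, f a a + ∑ b ∈ range t, (f (s + 2 * b + 1) (s + 2 * b) +
        f (s + 2 * b) (s + 2 * b + 1)) := by
  rw [sum_range_add, sum_range_two_mul]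
  congr 1
  · refine sum_congr rfl fun a ha => ?_
    rw [pairSwap, if_pos (mem_range.1 ha)]
  · refine sum_congr rfl fun b _ => ?_
    rw [add_comm]
    simp only [pairSwap]
    split_ifs <;> congr 2 <;> omega

theorem rank_of_symmetric_decomposition {m k : ℕ}
    (s t : ℕ) (hk : k = s + 2 * t) (z : ℕ → (Fin m → ZMod 2))
    (hz : LinearIndependent (ZMod 2) (fun i : Fin k => z i))
    (α : Matrix (Fin m) (Fin m) (ZMod 2))
    (hα : α = (∑ a ∈ Finset.range s, Matrix.vecMulVec (z a) (z a)) +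
          ∑ b ∈ Finset.range t,
            (Matrix.vecMulVec (z (s + 2 * b + 1)) (z (s + 2 * b)) +
             Matrix.vecMulVec (z (s + 2 * b)) (z (s + 2 * b + 1)))) :
    α.rank = k := by
  subst hk
  let σ : Fin (s + 2 * t) → Fin (s + 2 * t) := fun i => ⟨pairSwap s i, pairSwap_lt i.2⟩
  have hσ : Function.Injective σ := fun i j h =>
    Fin.ext ((pairSwap_involutive s).injective (congrArg Fin.val h))
  have hα' : α = ∑ i : Fin (s + 2 * t), vecMulVec (z i) (z (σ i)) := by
    rw [hα, ← sum_range_pairSwap (fun a b => vecMulVec (z a) (z b)),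
      ← Fin.sum_univ_eq_sum_range (fun n => vecMulVec (z n) (z (pairSwap s n)))]
  rw [hα']
  exact (rank_sum_vecMulVec_of_linearIndependent hz (hz.comp σ hσ)).trans (Fintype.card_fin _)
end
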